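/- (Differential entropy of the normal-inverse-Gamma distribution.) Let γ ∈ ℝ, ν > 0, α > 1, β > 0, and let p(μ, σ² | γ, ν, α, β) = (√ν/√(2πσ²)) (β^α/Γ(α)) (1/σ²)^{α+1} exp(−(2β + ν(μ−γ)²)/(2σ²)) be the normal-inverse-Gamma density on ℝ × (0, ∞). Then its differential entropy H = −∫_0^∞ ∫_{−∞}^∞ p log p dμ dσ² equals H = 1/2 + log(√(2π) β^{3/2} Γ(α)) − (log ν)/2 + α − (α + 3/2) ψ(α), where ψ is the digamma function and Γ the Gamma function. -/

import Mathlib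

open MeasureTheory Real

/-- The digamma function `ψ(z) = Γ'(z)/Γ(z)`. -/
noncomputable def digamma (z : ℝ) : ℝ := deriv Real.Gamma z / Real.Gamma z

/-- The normal-inverse-Gamma density
`p(μ, σ² | γ, ν, α, β) = (√ν/√(2πσ²)) (β^α/Γ(α)) (1/σ²)^{α+1}
  exp(-(2β + ν(μ-γ)²)/(2σ²))` on `ℝ × (0, ∞)`. -/
noncomputable def nigDensity (μ s γ ν α β : ℝ) : ℝ :=
  (Real.sqrt ν / Real.sqrt (2 * Real.pi * s)) * (β ^ α / Real.Gamma α) *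
    (1 / s) ^ (α + 1) * Real.exp (-(2 * β + ν * (μ - γ) ^ 2) / (2 * s))

open Set Filter MeasureTheory

section Aux

lemma hasDerivAt_Gamma_integral {a : ℝ} (ha : 0 < a) :
    HasDerivAt Real.Gamma (∫ t in Ioi (0:ℝ), t ^ (a - 1) * (Real.log t * Real.exp (-t))) a := by
  have hre : 0 < (a : ℂ).re := by simpa using ha
  have h1 := Complex.hasDerivAt_GammaIntegral hre
  have h2 : HasDerivAt (fun x : ℝ => (Complex.GammaIntegral x).re)
      (∫ t : ℝ in Ioi 0, (t : ℂ) ^ ((a : ℂ) - 1) * (Real.log t * Real.exp (-t))).re a :=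
    h1.real_of_complex
  have hint : (∫ t : ℝ in Ioi 0, (t : ℂ) ^ ((a : ℂ) - 1) * (Real.log t * Real.exp (-t)))
      = ((∫ t : ℝ in Ioi 0, t ^ (a - 1) * (Real.log t * Real.exp (-t)) : ℝ) : ℂ) := by
    have hco : ∀ r : ℝ, (Complex.ofReal r) = @RCLike.ofReal ℂ _ r := fun r => rfl
    conv_rhs => rw [hco, ← integral_ofReal]
    refine setIntegral_congr_fun measurableSet_Ioi (fun t ht => ?_)
    rw [← hco]
    rw [show ((a:ℂ) - 1) = ((a - 1 : ℝ) : ℂ) by push_cast; ring, ← Complex.ofReal_cpow ht.le]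
    push_cast
    ring
  rw [hint] at h2
  simp only [Complex.ofReal_re] at h2
  refine h2.congr_of_eventuallyEq ?_
  have hnb : Ioi (0:ℝ) ∈ nhds a := Ioi_mem_nhds ha
  filter_upwards [hnb] with x hx
  rw [Real.Gamma_eq_integral hx, Complex.GammaIntegral_ofReal, Complex.ofReal_re]

lemma integral_sq_gauss {c : ℝ} (hc : 0 < c) :
    ∫ x : ℝ, x ^ 2 * Real.exp (-c * x ^ 2) = Real.sqrt (π / c) / (2 * c) := by
  have h1 : ∫ x : ℝ, x ^ 2 * Real.exp (-c * x ^ 2)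
      = 2 * ∫ x in Ioi (0:ℝ), x ^ 2 * Real.exp (-c * x ^ 2) := by
    rw [← integral_comp_abs (f := fun y : ℝ => y ^ 2 * Real.exp (-c * y ^ 2))]
    congr 1; funext x; rw [sq_abs]
  set g : ℝ → ℝ := fun u => (1/2) * (u ^ ((3:ℝ)/2 - 1) * Real.exp (-(c * u))) with hg
  have h2 : (∫ x in Ioi (0:ℝ), (|(2:ℝ)| * x ^ ((2:ℝ) - 1)) • g (x ^ (2:ℝ)))
      = ∫ u in Ioi (0:ℝ), g u := integral_comp_rpow_Ioi g two_ne_zero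
  have h3 : ∀ x ∈ Ioi (0:ℝ), (|(2:ℝ)| * x ^ ((2:ℝ) - 1)) • g (x ^ (2:ℝ))
      = x ^ 2 * Real.exp (-c * x ^ 2) := by
    intro x hx
    have hx0 : (0:ℝ) < x := hx
    have e1 : x ^ ((2:ℝ) - 1) = x := by norm_num
    have e2 : x ^ (2:ℝ) = x ^ 2 := by
      rw [show (2:ℝ) = ((2:ℕ):ℝ) by norm_num, Real.rpow_natCast]
    have e3 : (x ^ 2) ^ ((3:ℝ)/2 - 1) = x := by
      rw [← e2, ← Real.rpow_mul hx0.le]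
      norm_num
    rw [hg]; simp only [smul_eq_mul, e1, e2, e3, abs_two]
    ring_nf
  rw [setIntegral_congr_fun measurableSet_Ioi h3] at h2
  have h4 : ∫ u in Ioi (0:ℝ), g u
      = (1/2) * ((1/c) ^ ((3:ℝ)/2) * Real.Gamma ((3:ℝ)/2)) := by
    rw [hg, integral_const_mul, integral_rpow_mul_exp_neg_mul_Ioi (by norm_num) hc]
  have hG : Real.Gamma ((3:ℝ)/2) = Real.sqrt π / 2 := by
    rw [show (3:ℝ)/2 = 1/2 + 1 by norm_num, Real.Gamma_add_one (by norm_num),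
      Real.Gamma_one_half_eq]
    ring
  rw [h1, h2, h4, hG]
  have hc' : Real.sqrt c ≠ 0 := (Real.sqrt_pos.mpr hc).ne'
  have e5 : ((1:ℝ)/c) ^ ((3:ℝ)/2) = (1/c) * Real.sqrt (1/c) := by
    rw [show (3:ℝ)/2 = 1 + 1/2 by norm_num, Real.rpow_add (by positivity), Real.rpow_one,
      ← Real.sqrt_eq_rpow]
  rw [e5, Real.sqrt_div (by positivity : (0:ℝ) ≤ π), one_div c, Real.sqrt_inv]
  field_simp

lemma inner_gauss {a c : ℝ} (ha : 0 < a) (hc : 0 < c) (γ : ℝ) :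
    ∫ μ : ℝ, (a * Real.exp (-c * (μ - γ) ^ 2)) * Real.log (a * Real.exp (-c * (μ - γ) ^ 2))
      = a * Real.sqrt (π / c) * (Real.log a - 1/2) := by
  set F : ℝ → ℝ := fun x => (a * Real.exp (-c * x ^ 2)) * Real.log (a * Real.exp (-c * x ^ 2))
    with hF
  have h0 : ∫ μ : ℝ, (a * Real.exp (-c * (μ - γ) ^ 2)) * Real.log (a * Real.exp (-c * (μ - γ) ^ 2))
      = ∫ x : ℝ, F x := integral_sub_right_eq_self F γ
  rw [h0]
  have key : ∀ x : ℝ, F x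
      = (a * Real.log a) * Real.exp (-c * x ^ 2) - (a * c) * (x ^ 2 * Real.exp (-c * x ^ 2)) := by
    intro x
    rw [hF]
    simp only
    rw [Real.log_mul ha.ne' (Real.exp_ne_zero _), Real.log_exp]
    ring
  rw [show F = fun x => (a * Real.log a) * Real.exp (-c * x ^ 2)
      - (a * c) * (x ^ 2 * Real.exp (-c * x ^ 2)) from funext key]
  have i1 : Integrable (fun x : ℝ => (a * Real.log a) * Real.exp (-c * x ^ 2)) :=
    (integrable_exp_neg_mul_sq hc).const_mul _
  have isq : Integrable (fun x : ℝ => x ^ 2 * Real.exp (-c * x ^ 2)) := by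
    have := integrable_rpow_mul_exp_neg_mul_sq hc (s := 2) (by norm_num)
    refine this.congr (Eventually.of_forall fun x => ?_)
    simp [Real.rpow_natCast]
  have i2 : Integrable (fun x : ℝ => (a * c) * (x ^ 2 * Real.exp (-c * x ^ 2))) :=
    isq.const_mul _
  rw [integral_sub i1 i2, integral_const_mul, integral_const_mul, integral_gaussian,
    integral_sq_gauss hc]
  have h5 : Real.sqrt (π / c) / (2 * c) = Real.sqrt (π/c) * (1/(2*c)) := by ring
  rw [h5]
  field_simp

lemma integrableOn_gamma_type {a b : ℝ} (ha : 0 < a) (hb : 0 < b) :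
    IntegrableOn (fun x : ℝ => x ^ (a - 1) * Real.exp (-(b * x))) (Ioi (0:ℝ)) := by
  have h : IntegrableOn (fun x : ℝ => Real.exp (-x) * x ^ (a - 1)) (Ioi (b * 0)) := by
    simpa using Real.GammaIntegral_convergent ha
  have h2 := (integrableOn_Ioi_comp_mul_left_iff
      (fun x : ℝ => Real.exp (-x) * x ^ (a - 1)) 0 hb).mpr h
  have h3 := h2.const_mul (b ^ (1 - a))
  refine MeasureTheory.IntegrableOn.congr_fun h3 (fun x hx => ?_) measurableSet_Ioi
  have hx0 : (0:ℝ) < x := hx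
  have hbb : b ^ (1-a) * b ^ (a-1) = 1 := by
    rw [← Real.rpow_add hb]; norm_num
  rw [Real.mul_rpow hb.le hx0.le,
    show b ^ (1-a) * (Real.exp (-(b * x)) * (b ^ (a-1) * x ^ (a-1)))
      = (b ^ (1-a) * b ^ (a-1)) * (x ^ (a-1) * Real.exp (-(b * x))) from by ring, hbb, one_mul]

lemma abs_log_le {x : ℝ} (hx : 0 < x) : |Real.log x| ≤ 2 * x ^ (-(1:ℝ)/2) + x := by
  have hrp : (0:ℝ) < x ^ (-(1:ℝ)/2) := Real.rpow_pos_of_pos hx _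
  rcases le_total x 1 with h1 | h1
  · have hl : Real.log x ≤ 0 := Real.log_nonpos hx.le h1
    rw [abs_of_nonpos hl]
    have : Real.log (x ^ (-(1:ℝ)/2)) = (-(1:ℝ)/2) * Real.log x := Real.log_rpow hx _
    have h2 : Real.log (x ^ (-(1:ℝ)/2)) ≤ x ^ (-(1:ℝ)/2) :=
      (Real.log_le_sub_one_of_pos hrp).trans (by linarith)
    nlinarith
  · have hl : 0 ≤ Real.log x := Real.log_nonneg h1
    rw [abs_of_nonneg hl]
    have h2 : Real.log x ≤ x - 1 := Real.log_le_sub_one_of_pos hx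
    nlinarith

lemma integrableOn_gamma_log {a b : ℝ} (ha : 1 < a) (hb : 0 < b) :
    IntegrableOn (fun x : ℝ => x ^ (a - 1) * Real.exp (-(b * x)) * Real.log x) (Ioi (0:ℝ)) := by
  have hbound : IntegrableOn (fun x : ℝ => 2 * (x ^ ((a - 1/2) - 1) * Real.exp (-(b * x)))
      + x ^ ((a+1) - 1) * Real.exp (-(b * x))) (Ioi (0:ℝ)) :=
    ((integrableOn_gamma_type (by linarith) hb).const_mul 2).add
      (integrableOn_gamma_type (by linarith) hb)
  refine Integrable.mono' hbound ?_ ?_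
  · refine (Measurable.aestronglyMeasurable ?_)
    apply Measurable.mul
    apply Measurable.mul
    · exact (measurable_id.pow_const _ : Measurable fun x : ℝ => x ^ (a-1))
    · exact (Real.measurable_exp.comp ((measurable_const.mul measurable_id).neg))
    · exact Real.measurable_log
  · refine (ae_restrict_iff' measurableSet_Ioi).2 (Eventually.of_forall fun x hx => ?_)
    have hx0 : (0:ℝ) < x := hx
    have hrp : (0:ℝ) < x ^ (a - 1) := Real.rpow_pos_of_pos hx0 _
    have hexp : (0:ℝ) < Real.exp (-(b * x)) := Real.exp_pos _
    have hlog := abs_log_le hx0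
    have e1 : x ^ (a - 1) * x ^ (-(1:ℝ)/2) = x ^ ((a - 1/2) - 1) := by
      rw [← Real.rpow_add hx0]; congr 1; ring
    have e2 : x ^ (a - 1) * x = x ^ ((a+1) - 1) := by
      nth_rewrite 2 [← Real.rpow_one x]
      rw [← Real.rpow_add hx0]; congr 1; ring
    rw [norm_mul, norm_mul, Real.norm_eq_abs, Real.norm_eq_abs, Real.norm_eq_abs,
      abs_of_nonneg hrp.le, abs_of_nonneg hexp.le]
    calc x ^ (a-1) * Real.exp (-(b * x)) * |Real.log x|
        ≤ x ^ (a-1) * Real.exp (-(b * x)) * (2 * x ^ (-(1:ℝ)/2) + x) := by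
          apply mul_le_mul_of_nonneg_left hlog (by positivity)
      _ = 2 * ((x ^ (a-1) * x ^ (-(1:ℝ)/2)) * Real.exp (-(b * x)))
          + (x ^ (a-1) * x) * Real.exp (-(b * x)) := by ring
      _ = _ := by rw [e1, e2]

lemma integral_gamma_log {a b : ℝ} (ha : 1 < a) (hb : 0 < b) :
    ∫ x in Ioi (0:ℝ), x ^ (a - 1) * Real.exp (-(b * x)) * Real.log x
      = (1/b) ^ a * (deriv Real.Gamma a - Real.Gamma a * Real.log b) := by
  have ha0 : 0 < a := by linarith
  set g : ℝ → ℝ := fun u => u ^ (a - 1) * Real.exp (-u) * (Real.log u - Real.log b) with hg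
  have h1 : (∫ x in Ioi (0:ℝ), g (b * x)) = b⁻¹ • ∫ u in Ioi (b * 0), g u :=
    integral_comp_mul_left_Ioi g 0 hb
  rw [mul_zero] at h1
  have h2 : ∀ x ∈ Ioi (0:ℝ),
      g (b*x) = b ^ (a-1) * (x ^ (a-1) * Real.exp (-(b*x)) * Real.log x) := by
    intro x hx
    have hx0 : (0:ℝ) < x := hx
    rw [hg]; simp only
    rw [Real.mul_rpow hb.le hx0.le, Real.log_mul hb.ne' hx0.ne']
    ring
  rw [setIntegral_congr_fun measurableSet_Ioi h2, integral_const_mul] at h1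
  have hIlog : IntegrableOn (fun u : ℝ => u ^ (a-1) * Real.exp (-(1 * u)) * Real.log u)
      (Ioi (0:ℝ)) := integrableOn_gamma_log ha one_pos
  simp only [one_mul] at hIlog
  have hIg : IntegrableOn (fun u : ℝ => u ^ (a-1) * Real.exp (-u)) (Ioi (0:ℝ)) := by
    have := integrableOn_gamma_type ha0 one_pos
    simpa using this
  have hsplit : ∫ u in Ioi (0:ℝ), g u
      = (∫ u in Ioi (0:ℝ), u ^ (a-1) * Real.exp (-u) * Real.log u)
        - Real.log b * ∫ u in Ioi (0:ℝ), u ^ (a-1) * Real.exp (-u) := by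
    rw [← integral_const_mul, ← integral_sub hIlog (hIg.const_mul _)]
    congr 1; funext u; rw [hg]; simp only; ring
  have hGam : ∫ u in Ioi (0:ℝ), u ^ (a-1) * Real.exp (-u) = Real.Gamma a := by
    rw [Real.Gamma_eq_integral ha0]
    congr 1; funext u; ring
  have hDer : ∫ u in Ioi (0:ℝ), u ^ (a-1) * Real.exp (-u) * Real.log u = deriv Real.Gamma a := by
    rw [(hasDerivAt_Gamma_integral ha0).deriv]
    congr 1; funext u; ring
  rw [hsplit, hGam, hDer, smul_eq_mul] at h1
  have key : (1/b) ^ a * b ^ (a-1) = b⁻¹ := by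
    rw [one_div, ← Real.rpow_neg_one b, ← Real.rpow_mul hb.le, ← Real.rpow_add hb]
    congr 1; ring
  have hb' : (b:ℝ)⁻¹ ≠ 0 := inv_ne_zero hb.ne'
  apply mul_left_cancel₀ hb'
  calc b⁻¹ * ∫ x in Ioi (0:ℝ), x ^ (a - 1) * Real.exp (-(b * x)) * Real.log x
      = ((1/b) ^ a * b ^ (a-1)) * ∫ x in Ioi (0:ℝ), x ^ (a - 1) * Real.exp (-(b * x)) * Real.log x := by
        rw [key]
    _ = (1/b) ^ a * (b ^ (a-1) * ∫ x in Ioi (0:ℝ), x ^ (a - 1) * Real.exp (-(b * x)) * Real.log x) := by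
        ring
    _ = (1/b) ^ a * (b⁻¹ * (deriv Real.Gamma a - Real.log b * Real.Gamma a)) := by rw [h1]
    _ = b⁻¹ * ((1/b) ^ a * (deriv Real.Gamma a - Real.Gamma a * Real.log b)) := by ring

end Aux


/-- **Differential entropy of the normal-inverse-Gamma distribution.** For `γ ∈ ℝ`,
`ν > 0`, `α > 1`, `β > 0`,
`H = -∫_0^∞ ∫_ℝ p log p dμ dσ²
  = 1/2 + log(√(2π) β^{3/2} Γ(α)) - (log ν)/2 + α - (α + 3/2) ψ(α)`. -/
theorem nig_differential_entropy (γ ν α β : ℝ) (hν : 0 < ν) (hα : 1 < α) (hβ : 0 < β) :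
    -(∫ s in Set.Ioi (0 : ℝ),
        ∫ μ : ℝ, nigDensity μ s γ ν α β * Real.log (nigDensity μ s γ ν α β))
      = 1 / 2 + Real.log (Real.sqrt (2 * Real.pi) * β ^ ((3 : ℝ) / 2) * Real.Gamma α)
          - Real.log ν / 2 + α - (α + 3 / 2) * digamma α := by
  have ha0 : (0:ℝ) < α := by linarith
  have hΓ : 0 < Real.Gamma α := Real.Gamma_pos_of_pos ha0
  have hπ : (0:ℝ) < π := Real.pi_pos
  set C : ℝ := Real.sqrt ν / Real.sqrt (2*π) * (β ^ α / Real.Gamma α) with hCdef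
  have hC : 0 < C := by
    rw [hCdef]; positivity
  set D : ℝ := β ^ α / Real.Gamma α with hDdef
  set A : ℝ → ℝ := fun s => C * s ^ (-(α + 3/2)) * Real.exp (-β/s) with hAdef
  have hApos : ∀ s ∈ Ioi (0:ℝ), 0 < A s := by
    intro s hs
    have hs0 : (0:ℝ) < s := hs
    rw [hAdef]; positivity
  -- Step A: rewrite the density
  have hdens : ∀ s ∈ Ioi (0:ℝ), ∀ μ : ℝ,
      nigDensity μ s γ ν α β = A s * Real.exp (-(ν/(2*s)) * (μ - γ) ^ 2) := by
    intro s hs μ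
    have hs0 : (0:ℝ) < s := hs
    have hss : Real.sqrt s ≠ 0 := (Real.sqrt_pos.mpr hs0).ne'
    unfold nigDensity
    have e1 : Real.sqrt (2*π*s) = Real.sqrt (2*π) * Real.sqrt s := Real.sqrt_mul (by positivity) s
    have e2 : ((1:ℝ)/s) ^ (α+1) = (s ^ (α+1))⁻¹ := by
      rw [one_div, Real.inv_rpow hs0.le]
    have e3 : Real.exp (-(2*β + ν*(μ-γ)^2)/(2*s))
        = Real.exp (-β/s) * Real.exp (-(ν/(2*s))*(μ-γ)^2) := by
      rw [← Real.exp_add]; congr 1; field_simp; ring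
    have e4 : Real.sqrt s = s ^ ((1:ℝ)/2) := Real.sqrt_eq_rpow s
    have e6 : s ^ (-(α + 3/2)) = (s ^ ((1:ℝ)/2) * s ^ (α+1))⁻¹ := by
      rw [← Real.rpow_add hs0, ← Real.rpow_neg hs0.le]
      congr 1; ring
    have hsp1 : s ^ (α+1) ≠ 0 := (Real.rpow_pos_of_pos hs0 _).ne'
    have hsp2 : s ^ ((1:ℝ)/2) ≠ 0 := (Real.rpow_pos_of_pos hs0 _).ne'
    have h2π : Real.sqrt (2*π) ≠ 0 := (Real.sqrt_pos.mpr (by positivity)).ne'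
    rw [e1, e2, e3, e4, hAdef]
    simp only
    rw [hCdef, hDdef, e6]
    field_simp
  -- Step B: inner integral
  have hinner : ∀ s ∈ Ioi (0:ℝ),
      (∫ μ : ℝ, nigDensity μ s γ ν α β * Real.log (nigDensity μ s γ ν α β))
        = A s * Real.sqrt (π / (ν/(2*s))) * (Real.log (A s) - 1/2) := by
    intro s hs
    have hs0 : (0:ℝ) < s := hs
    have hc : 0 < ν/(2*s) := by positivity
    have hrw : (fun μ : ℝ => nigDensity μ s γ ν α β * Real.log (nigDensity μ s γ ν α β))
        = fun μ : ℝ => (A s * Real.exp (-(ν/(2*s)) * (μ - γ) ^ 2))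
            * Real.log (A s * Real.exp (-(ν/(2*s)) * (μ - γ) ^ 2)) :=
      funext fun μ => by rw [hdens s hs μ]
    rw [hrw, inner_gauss (hApos s hs) hc γ]
  set K : ℝ := Real.log C - 1/2 with hKdef
  set G : ℝ → ℝ := fun s => D * (s ^ (-(α+1)) * Real.exp (-β/s))
      * (K - (α+3/2) * Real.log s - β/s) with hGdef
  have hAval : ∀ s ∈ Ioi (0:ℝ),
      A s * Real.sqrt (π / (ν/(2*s))) * (Real.log (A s) - 1/2) = G s := by
    intro s hs
    have hs0 : (0:ℝ) < s := hs
    have hsp : (0:ℝ) < s ^ (-(α + 3/2)) := Real.rpow_pos_of_pos hs0 _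
    have hlogA : Real.log (A s) = Real.log C - (α+3/2) * Real.log s - β/s := by
      rw [hAdef]; simp only
      rw [Real.log_mul (mul_ne_zero hC.ne' hsp.ne') (Real.exp_ne_zero _),
        Real.log_mul hC.ne' hsp.ne', Real.log_rpow hs0, Real.log_exp]
      ring
    have hsq : Real.sqrt (π / (ν/(2*s))) = Real.sqrt (2*π) / Real.sqrt ν * s ^ ((1:ℝ)/2) := by
      rw [show π / (ν/(2*s)) = (2*π/ν) * s from by field_simp,
        Real.sqrt_mul (by positivity) s, Real.sqrt_div (by positivity : (0:ℝ) ≤ 2*π) ν,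
        Real.sqrt_eq_rpow s]
    have hCD : C * (Real.sqrt (2*π) / Real.sqrt ν) = D := by
      have h2π : Real.sqrt (2*π) ≠ 0 := (Real.sqrt_pos.mpr (by positivity)).ne'
      have hsν : Real.sqrt ν ≠ 0 := (Real.sqrt_pos.mpr hν).ne'
      rw [hCdef]
      field_simp
    have hss2 : s ^ (-(α+3/2)) * s ^ ((1:ℝ)/2) = s ^ (-(α+1)) := by
      rw [← Real.rpow_add hs0]; congr 1; ring
    calc A s * Real.sqrt (π / (ν/(2*s))) * (Real.log (A s) - 1/2)
        = (C * (Real.sqrt (2*π) / Real.sqrt ν)) * ((s ^ (-(α+3/2)) * s ^ ((1:ℝ)/2))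
            * Real.exp (-β/s)) * (Real.log C - (α+3/2) * Real.log s - β/s - 1/2) := by
          rw [hlogA, hsq, hAdef]; ring
      _ = G s := by rw [hCD, hss2, hGdef, hKdef]; ring
  have hout : (∫ s in Set.Ioi (0:ℝ),
      ∫ μ : ℝ, nigDensity μ s γ ν α β * Real.log (nigDensity μ s γ ν α β))
      = ∫ s in Ioi (0:ℝ), G s :=
    setIntegral_congr_fun measurableSet_Ioi (fun s hs => by rw [hinner s hs, hAval s hs])
  -- Step C: substitution s = 1/x and Gamma integrals
  have hsub := integral_comp_rpow_Ioi G (p := (-1:ℝ)) (by norm_num)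
  have hxform : ∀ x ∈ Ioi (0:ℝ), (|(-1:ℝ)| * x ^ ((-1:ℝ) - 1)) • G (x ^ ((-1):ℝ))
      = D * K * (x ^ (α-1) * Real.exp (-(β*x)))
        + D * (α+3/2) * (x ^ (α-1) * Real.exp (-(β*x)) * Real.log x)
        - D * β * (x ^ ((α+1)-1) * Real.exp (-(β*x))) := by
    intro x hx
    have hx0 : (0:ℝ) < x := hx
    have e0 : x ^ ((-1):ℝ) = x⁻¹ := Real.rpow_neg_one x
    have e1 : (x ^ ((-1):ℝ)) ^ (-(α+1)) = x ^ (α+1) := by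
      rw [← Real.rpow_mul hx0.le]; congr 1; ring
    have e2 : Real.log (x ^ ((-1):ℝ)) = - Real.log x := by rw [e0, Real.log_inv]
    have e3 : -β / (x ^ ((-1):ℝ)) = -(β*x) := by
      rw [e0, div_eq_mul_inv, inv_inv]; ring
    have e3b : β / (x ^ ((-1):ℝ)) = β * x := by
      rw [e0, div_eq_mul_inv, inv_inv]
    have e4 : x ^ ((-1:ℝ) - 1) * x ^ (α+1) = x ^ (α-1) := by
      rw [← Real.rpow_add hx0]; congr 1; ring
    have e5 : x ^ (α-1) * x = x ^ ((α+1)-1) := by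
      nth_rewrite 2 [← Real.rpow_one x]
      rw [← Real.rpow_add hx0]; congr 1; ring
    rw [hGdef]
    simp only [smul_eq_mul]
    rw [e1, e2, e3, e3b]
    calc |(-1:ℝ)| * x ^ ((-1:ℝ) - 1) * (D * (x ^ (α+1) * Real.exp (-(β*x)))
            * (K - (α+3/2) * (- Real.log x) - β*x))
        = D * ((x ^ ((-1:ℝ) - 1) * x ^ (α+1)) * Real.exp (-(β*x)))
            * (K + (α+3/2) * Real.log x - β*x) := by
          rw [abs_of_nonpos (by norm_num : (-1:ℝ) ≤ 0)]
          ring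
      _ = D * (x ^ (α-1) * Real.exp (-(β*x))) * (K + (α+3/2) * Real.log x - β*x) := by
          rw [e4]
      _ = _ := by rw [← e5]; ring
  rw [setIntegral_congr_fun measurableSet_Ioi hxform] at hsub
  have i0 : IntegrableOn (fun x : ℝ => x ^ (α-1) * Real.exp (-(β*x))) (Ioi (0:ℝ)) :=
    integrableOn_gamma_type ha0 hβ
  have i1 : IntegrableOn (fun x : ℝ => x ^ ((α+1)-1) * Real.exp (-(β*x))) (Ioi (0:ℝ)) :=
    integrableOn_gamma_type (by linarith) hβ
  have iL : IntegrableOn (fun x : ℝ => x ^ (α-1) * Real.exp (-(β*x)) * Real.log x) (Ioi (0:ℝ)) :=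
    integrableOn_gamma_log hα hβ
  have iadd : IntegrableOn (fun x : ℝ => D * K * (x ^ (α-1) * Real.exp (-(β*x)))
      + D * (α+3/2) * (x ^ (α-1) * Real.exp (-(β*x)) * Real.log x)) (Ioi (0:ℝ)) :=
    ((i0.const_mul _).add (iL.const_mul _))
  rw [integral_sub iadd (i1.const_mul _),
    integral_add (i0.const_mul _) (iL.const_mul _), integral_const_mul, integral_const_mul,
    integral_const_mul, integral_rpow_mul_exp_neg_mul_Ioi ha0 hβ,
    integral_rpow_mul_exp_neg_mul_Ioi (show (0:ℝ) < α+1 by linarith) hβ,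
    integral_gamma_log hα hβ] at hsub
  have hβα : (1/β) ^ α * β ^ α = 1 := by
    rw [one_div, Real.inv_rpow hβ.le]
    exact inv_mul_cancel₀ (Real.rpow_pos_of_pos hβ _).ne'
  have hβα1 : (1/β) ^ (α+1) * β ^ (α+1) = 1 := by
    rw [one_div, Real.inv_rpow hβ.le]
    exact inv_mul_cancel₀ (Real.rpow_pos_of_pos hβ _).ne'
  have hβp1 : β ^ α * β = β ^ (α+1) := (Real.rpow_add_one hβ.ne' α).symm
  have hΓ1 : Real.Gamma (α+1) = α * Real.Gamma α := Real.Gamma_add_one ha0.ne'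
  have T1 : D * ((1/β) ^ α * Real.Gamma α) = 1 := by
    rw [hDdef]
    calc β ^ α / Real.Gamma α * ((1/β) ^ α * Real.Gamma α)
        = ((1/β) ^ α * β ^ α) * (Real.Gamma α / Real.Gamma α) := by ring
      _ = 1 := by rw [hβα, div_self hΓ.ne', one_mul]
  have T2 : D * ((1/β) ^ α * (deriv Real.Gamma α - Real.Gamma α * Real.log β))
      = digamma α - Real.log β := by
    rw [hDdef]
    simp only [digamma]
    calc β ^ α / Real.Gamma α * ((1/β) ^ α * (deriv Real.Gamma α - Real.Gamma α * Real.log β))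
        = ((1/β) ^ α * β ^ α) * (deriv Real.Gamma α / Real.Gamma α
            - (Real.Gamma α / Real.Gamma α) * Real.log β) := by ring
      _ = deriv Real.Gamma α / Real.Gamma α - Real.log β := by
          rw [hβα, div_self hΓ.ne', one_mul, one_mul]
  have T3 : D * β * ((1/β) ^ (α+1) * Real.Gamma (α+1)) = α := by
    rw [hDdef, hΓ1]
    calc β ^ α / Real.Gamma α * β * ((1/β) ^ (α+1) * (α * Real.Gamma α))
        = ((1/β) ^ (α+1) * (β ^ α * β)) * (Real.Gamma α / Real.Gamma α) * α := by ring
      _ = α := by rw [hβp1, hβα1, div_self hΓ.ne', one_mul, one_mul]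
  have houter : (∫ s in Ioi (0:ℝ), G s)
      = K + (α+3/2) * (digamma α - Real.log β) - α := by
    rw [← hsub]
    calc D * K * ((1/β) ^ α * Real.Gamma α)
          + D * (α+3/2) * ((1/β) ^ α * (deriv Real.Gamma α - Real.Gamma α * Real.log β))
          - D * β * ((1/β) ^ (α+1) * Real.Gamma (α+1))
        = K * (D * ((1/β) ^ α * Real.Gamma α))
          + (α+3/2) * (D * ((1/β) ^ α * (deriv Real.Gamma α - Real.Gamma α * Real.log β)))
          - D * β * ((1/β) ^ (α+1) * Real.Gamma (α+1)) := by ring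
      _ = K * 1 + (α+3/2) * (digamma α - Real.log β) - α := by rw [T1, T2, T3]
      _ = _ := by ring
  rw [hout, houter]
  have h2π : Real.sqrt (2*π) ≠ 0 := (Real.sqrt_pos.mpr (by positivity)).ne'
  have hsν : Real.sqrt ν ≠ 0 := (Real.sqrt_pos.mpr hν).ne'
  have hlogC : Real.log C = Real.log ν / 2 - Real.log (Real.sqrt (2*π))
      + α * Real.log β - Real.log (Real.Gamma α) := by
    have hx1 : (Real.sqrt ν / Real.sqrt (2*π)) ≠ 0 := by positivity
    have hx2 : (β ^ α / Real.Gamma α) ≠ 0 := by positivity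
    rw [hCdef, hDdef, Real.log_mul hx1 hx2, Real.log_div hsν h2π,
      Real.log_div (Real.rpow_pos_of_pos hβ α).ne' hΓ.ne', Real.log_rpow hβ,
      Real.log_sqrt hν.le]
    ring
  have hlogR : Real.log (Real.sqrt (2*π) * β ^ ((3:ℝ)/2) * Real.Gamma α)
      = Real.log (Real.sqrt (2*π)) + (3/2) * Real.log β + Real.log (Real.Gamma α) := by
    rw [Real.log_mul (mul_ne_zero h2π (Real.rpow_pos_of_pos hβ _).ne') hΓ.ne',
      Real.log_mul h2π (Real.rpow_pos_of_pos hβ _).ne', Real.log_rpow hβ]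
  rw [hKdef, hlogC, hlogR]
  ring
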